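/- arXiv:1510.01758 — 7 statements merged into one kernel-verified Lean document; each statement's English description precedes it below -/
import Mathlib

section
/- Let q be a prime power and f(x) = x^n + a x^s + b ∈ F_q[x] with a, b ≠ 0 and n > s > 0. Let δ = gcd(n, s, q-1). Then the number of distinct roots of f in F_q is at most δ · ⌊1/2 + √((q-1)/δ)⌋. -/
/-!
The map `x ↦ (xⁿ, xˢ)` is a homomorphism `φ : F_q^× → F_q^× × F_q^×` with kernel the δ-th roots of
unity, so its image `C` has `(q - 1)/δ` elements and every root of `f` shares its image with at most
`δ - 1` other roots. The images of the `k` distinct roots are points of `C` on the line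
`u + a v + b = 0`, and the quotient map `(p, p') ↦ p / p'` sends the `k(k - 1)` pairs of distinct
such points injectively into `C \ {1}`. Hence `k² - k + 1 ≤ (q - 1)/δ`, i.e. `k ≤ 1/2 + √((q - 1)/δ)`.
-/

open Polynomial Finset

theorem MonoidHom.card_le_card_ker_mul_card_image {G H : Type*} [Group G] [Group H]
    [DecidableEq H] (φ : G →* H) [Finite φ.ker] (S : Finset G) :
    #S ≤ Nat.card φ.ker * #(S.image φ) := by
  classical
  refine card_le_mul_card_image S _ fun h hh => ?_
  obtain ⟨x, -, rfl⟩ := mem_image.1 hh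
  have hker : ↑({y ∈ S | φ y = φ x}.image (x⁻¹ * ·)) ⊆ (φ.ker : Set G) := by
    intro y hy
    obtain ⟨z, hz, rfl⟩ := mem_image.1 hy
    simp_all [MonoidHom.mem_ker]
  calc #{y ∈ S | φ y = φ x} = #({y ∈ S | φ y = φ x}.image (x⁻¹ * ·)) :=
        (card_image_of_injective _ (mul_right_injective _)).symm
    _ ≤ Nat.card φ.ker := by
        rw [← Set.ncard_coe_finset, ← Nat.card_coe_set_eq]
        exact Set.ncard_le_ncard hker

theorem ker_prod_powMonoidHom {G : Type*} [CommGroup G] (n s : ℕ) :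
    ((powMonoidHom n).prod (powMonoidHom s) : G →* G × G).ker = (powMonoidHom (n.gcd s)).ker := by
  ext g
  simp [MonoidHom.mem_ker, pow_gcd_eq_one, Prod.ext_iff]

theorem IsCyclic.card_ker_prod_powMonoidHom {G : Type*} [CommGroup G] [IsCyclic G] [Finite G]
    (n s : ℕ) :
    Nat.card ((powMonoidHom n).prod (powMonoidHom s) : G →* G × G).ker =
      (Nat.card G).gcd (n.gcd s) := by
  rw [ker_prod_powMonoidHom, IsCyclic.card_powMonoidHom_ker]

theorem Nat.le_floor_half_add_sqrt {k m : ℕ} (h : k * k - k < m) :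
    k ≤ ⌊(1 : ℝ) / 2 + √m⌋₊ := by
  have hk : k * k + 1 ≤ m + k := by omega
  have hkR : (k : ℝ) ^ 2 + 1 ≤ m + k := by exact_mod_cast (sq k).symm ▸ hk
  have hsq : ((k : ℝ) - 1 / 2) ^ 2 ≤ m := by nlinarith
  apply Nat.le_floor
  linarith [le_abs_self ((k : ℝ) - 1 / 2), Real.abs_le_sqrt hsq]

theorem eq_and_eq_of_affine_mul_eq {F : Type*} [Field F] {a b v₁ v₂ v₃ v₄ : F} (ha : a ≠ 0)
    (hb : b ≠ 0) (h₁₂ : v₁ ≠ v₂) (hv : v₁ * v₄ = v₃ * v₂)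
    (haff : (a * v₁ + b) * (a * v₄ + b) = (a * v₃ + b) * (a * v₂ + b)) :
    v₁ = v₃ ∧ v₂ = v₄ := by
  have hsum : v₁ + v₄ = v₂ + v₃ :=
    mul_left_cancel₀ (mul_ne_zero ha hb) (by linear_combination haff - a ^ 2 * hv)
  have hquad : (v₁ - v₂) * (v₁ - v₃) = 0 := by linear_combination -hv + v₁ * hsum
  have h₁₃ : v₁ = v₃ := sub_eq_zero.1 ((mul_eq_zero.1 hquad).resolve_left (sub_ne_zero.2 h₁₂))
  exact ⟨h₁₃, by linear_combination h₁₃ - hsum⟩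

theorem injOn_div_offDiag_of_mem_line {F : Type*} [Field F] {a b : F} (ha : a ≠ 0) (hb : b ≠ 0)
    {P : Finset (Fˣ × Fˣ)} (hP : ∀ p ∈ P, (p.1 : F) + a * p.2 + b = 0) :
    Set.InjOn (fun pq : (Fˣ × Fˣ) × (Fˣ × Fˣ) => pq.1 / pq.2) P.offDiag := by
  have hfst : ∀ p ∈ P, (p.1 : F) = -(a * p.2 + b) := fun p hp => by
    linear_combination hP p hp
  have hcross : ∀ x y z w : Fˣ, x / y = z / w → (x : F) * w = z * y := fun x y z w h => by
    rw [div_eq_div_iff_mul_eq_mul] at h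
    exact_mod_cast h
  rw [coe_offDiag]
  rintro ⟨p, p'⟩ ⟨hp, hp', hne⟩ ⟨r, r'⟩ ⟨hr, hr', -⟩ heq
  simp only [Prod.div_def, Prod.mk.injEq] at heq
  have hsnd : (p.2 : F) ≠ p'.2 := fun h => hne <| Prod.ext
    (Units.ext <| by rw [hfst p hp, hfst p' hp', h]) (Units.ext h)
  have haff := hcross _ _ _ _ heq.1
  rw [hfst p hp, hfst p' hp', hfst r hr, hfst r' hr'] at haff
  obtain ⟨h₁, h₂⟩ := eq_and_eq_of_affine_mul_eq ha hb hsnd (hcross _ _ _ _ heq.2)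
    (by linear_combination haff)
  have hpr : p = r := Prod.ext (Units.ext <| by rw [hfst p hp, hfst r hr, h₁]) (Units.ext h₁)
  have hpr' : p' = r' := Prod.ext (Units.ext <| by rw [hfst p' hp', hfst r' hr', h₂]) (Units.ext h₂)
  rw [hpr, hpr']

theorem card_offDiag_lt_card_of_mem_line {F : Type*} [Field F] {a b : F} (ha : a ≠ 0) (hb : b ≠ 0)
    (H : Subgroup (Fˣ × Fˣ)) [Finite H] {P : Finset (Fˣ × Fˣ)} (hPH : ∀ p ∈ P, p ∈ H)
    (hP : ∀ p ∈ P, (p.1 : F) + a * p.2 + b = 0) :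
    #P.offDiag < Nat.card H := by
  classical
  set D := P.offDiag.image fun pq => pq.1 / pq.2
  have hD : (D : Set (Fˣ × Fˣ)) ⊂ H := by
    refine Set.ssubset_iff_insert.2 ⟨1, ?_, Set.insert_subset H.one_mem ?_⟩
    · simp [D, div_eq_one]
    · intro x hx
      obtain ⟨pq, hpq, rfl⟩ := mem_image.1 hx
      rw [mem_offDiag] at hpq
      exact H.div_mem (hPH _ hpq.1) (hPH _ hpq.2.1)
  rw [← card_image_of_injOn (injOn_div_offDiag_of_mem_line ha hb hP), ← Set.ncard_coe_finset,
    ← Nat.card_coe_set_eq]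
  exact Set.ncard_lt_ncard hD

theorem stmt4 (F : Type*) [Field F] [Fintype F] [DecidableEq F]
    (n s : ℕ) (a b : F) (ha : a ≠ 0) (hb : b ≠ 0) (hs : 0 < s) (hsn : s < n)
    (δ : ℕ) (hδ : δ = Nat.gcd n (Nat.gcd s (Fintype.card F - 1))) :
    (X ^ n + C a * X ^ s + C b : F[X]).roots.toFinset.card ≤
      δ * ⌊(1 : ℝ) / 2 + Real.sqrt (((Fintype.card F - 1 : ℕ) : ℝ) / (δ : ℝ))⌋₊ := by
  classical
  set φ : Fˣ →* Fˣ × Fˣ := (powMonoidHom n).prod (powMonoidHom s)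
  set U : Finset Fˣ := {u | (u : F) ^ n + a * u ^ s + b = 0}
  have hunits : Nat.card Fˣ = Fintype.card F - 1 := by
    rw [Nat.card_units, Nat.card_eq_fintype_card]
  have hker : Nat.card φ.ker = δ := by
    rw [IsCyclic.card_ker_prod_powMonoidHom, hunits, hδ, Nat.gcd_comm, Nat.gcd_assoc]
  have hroots : #(X ^ n + C a * X ^ s + C b : F[X]).roots.toFinset ≤ #U := by
    refine card_le_card_of_surjOn Units.val fun x hx => ?_
    have hx : x ^ n + a * x ^ s + b = 0 := by
      simpa using (mem_roots'.1 (Multiset.mem_toFinset.1 hx)).2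
    have hx0 : x ≠ 0 := by
      rintro rfl
      simp [zero_pow hs.ne', zero_pow (hs.trans hsn).ne', hb] at hx
    exact ⟨Units.mk0 x hx0, by simpa [U] using hx, rfl⟩
  have hline : #(U.image φ).offDiag < Nat.card φ.range :=
    card_offDiag_lt_card_of_mem_line ha hb φ.range (by simp) (by simp [U, φ])
  have hrange : Nat.card φ.range * δ = Fintype.card F - 1 := by
    rw [← hker, ← hunits, mul_comm, ← φ.ker.card_mul_index, Subgroup.index_ker]
  have hδpos : 0 < δ := hker ▸ Nat.card_pos
  have hrangeR : (Nat.card φ.range : ℝ) = ((Fintype.card F - 1 : ℕ) : ℝ) / δ := by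
    rw [eq_div_iff (by exact_mod_cast hδpos.ne'), ← hrange, Nat.cast_mul]
  calc _ ≤ δ * #(U.image φ) := hroots.trans (hker ▸ φ.card_le_card_ker_mul_card_image U)
    _ ≤ _ := Nat.mul_le_mul_left _
        (hrangeR ▸ Nat.le_floor_half_add_sqrt (offDiag_card (U.image φ) ▸ hline))
end

section
/- Let q be a prime power and f(x) = x^n + a x^s + b ∈ F_q[x] with a, b ≠ 0, n > s > 0, and gcd(n, s, q-1) = 1. Then the number of distinct roots of f in F_q is at most 1/2 + √(q-1); equivalently, if r is the number of distinct roots then r^2 - r + 1 ≤ q - 1. -/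
/-!
Send an ordered pair `(x, y)` of distinct roots to the ratio `u = y / x`, which lies outside
`{0, 1}`. The ratio determines the pair: subtracting the equations for `x` and `u x` gives
`x ^ (n - s) (u ^ n - 1) = -a (u ^ s - 1)`, where `u ^ n ≠ 1` because `u ≠ 1` and
`gcd (n, s, q - 1) = 1`; so `u` fixes `x ^ (n - s)`, then `x ^ s (x ^ (n - s) + a) = -b` fixes `x ^ s`,
and the gcd condition again recovers `x` from `x ^ n` and `x ^ s`. Therefore `r (r - 1) ≤ q - 2`.
-/

open Polynomial

namespace FiniteField

variable {K : Type*} [CommGroupWithZero K] [Fintype K] {n s : ℕ}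

theorem eq_one_of_pow_eq_one_of_gcd_eq_one
    (hgcd : Nat.gcd n (Nat.gcd s (Fintype.card K - 1)) = 1)
    {w : K} (hw : w ≠ 0) (hn : w ^ n = 1) (hs : w ^ s = 1) : w = 1 := by
  have hq : w ^ (Fintype.card K - 1) = 1 := pow_card_sub_one_eq_one w hw
  have hd : orderOf w ∣ 1 :=
    hgcd ▸ Nat.dvd_gcd (orderOf_dvd_of_pow_eq_one hn)
      (Nat.dvd_gcd (orderOf_dvd_of_pow_eq_one hs) (orderOf_dvd_of_pow_eq_one hq))
  exact orderOf_eq_one_iff.mp (Nat.dvd_one.mp hd)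

theorem eq_of_pow_eq_of_gcd_eq_one
    (hgcd : Nat.gcd n (Nat.gcd s (Fintype.card K - 1)) = 1)
    {w w' : K} (hw : w ≠ 0) (hw' : w' ≠ 0) (hn : w ^ n = w' ^ n) (hs : w ^ s = w' ^ s) :
    w = w' := by
  refine (div_eq_one_iff_eq hw').mp (eq_one_of_pow_eq_one_of_gcd_eq_one hgcd
    (div_ne_zero hw hw') ?_ ?_)
  · rw [div_pow, hn, div_self (pow_ne_zero n hw')]
  · rw [div_pow, hs, div_self (pow_ne_zero s hw')]

theorem card_offDiag_le_card_sub_two {F : Type*} [Field F] [Fintype F] {S : Finset F}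
    (h0 : 0 ∉ S) (hinj : Set.InjOn (fun p : F × F => p.2 / p.1) S.offDiag) :
    S.offDiag.card ≤ Fintype.card F - 2 := by
  classical
  have hcard : (Finset.univ \ {0, 1} : Finset F).card = Fintype.card F - 2 := by
    rw [Finset.card_sdiff_of_subset (Finset.subset_univ _), Finset.card_univ,
      Finset.card_pair zero_ne_one]
  rw [← hcard]
  refine Finset.card_le_card_of_injOn _ (fun p hp => ?_) hinj
  obtain ⟨hx, hy, hxy⟩ := Finset.mem_offDiag.mp hp
  have hx0 : p.1 ≠ 0 := ne_of_mem_of_not_mem hx h0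
  have hy0 : p.2 ≠ 0 := ne_of_mem_of_not_mem hy h0
  simp only [Finset.coe_sdiff, Finset.coe_univ, Finset.coe_insert, Finset.coe_singleton,
    Set.mem_sdiff, Set.mem_univ, Set.mem_insert_iff, Set.mem_singleton_iff, not_or, true_and]
  exact ⟨div_ne_zero hy0 hx0, fun h => hxy ((div_eq_one_iff_eq hx0).mp h).symm⟩

end FiniteField

namespace Trinomial

variable {F : Type*} [Field F] {n s : ℕ} {a b : F}

theorem ne_zero_of_eval_eq_zero (hb : b ≠ 0) (hn : n ≠ 0) (hs : s ≠ 0) {x : F}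
    (hx : x ^ n + a * x ^ s + b = 0) : x ≠ 0 := by
  rintro rfl
  simp [zero_pow hn, zero_pow hs, hb] at hx

theorem pow_mul_pow_sub_add_eq (hsn : s ≤ n) {x : F} (hx : x ^ n + a * x ^ s + b = 0) :
    x ^ s * (x ^ (n - s) + a) = -b := by
  rw [mul_add, ← pow_add, Nat.add_sub_cancel' hsn]
  linear_combination hx

theorem pow_sub_mul_eq_of_mul_eval_eq_zero (hsn : s ≤ n) {x u : F} (hx0 : x ≠ 0)
    (hx : x ^ n + a * x ^ s + b = 0) (hux : (u * x) ^ n + a * (u * x) ^ s + b = 0) :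
    x ^ (n - s) * (u ^ n - 1) = -(a * (u ^ s - 1)) := by
  have hsplit : x ^ n = x ^ (n - s) * x ^ s := by rw [← pow_add, Nat.sub_add_cancel hsn]
  rw [mul_pow, mul_pow] at hux
  refine mul_right_cancel₀ (pow_ne_zero s hx0) ?_
  linear_combination hux - hx - (u ^ n - 1) * hsplit

variable [Fintype F]

theorem eq_of_mul_eval_eq_zero (ha : a ≠ 0) (hb : b ≠ 0) (hs : s ≠ 0) (hsn : s < n)
    (hgcd : Nat.gcd n (Nat.gcd s (Fintype.card F - 1)) = 1) {x x' u : F} (hu1 : u ≠ 1)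
    (hx : x ^ n + a * x ^ s + b = 0) (hux : (u * x) ^ n + a * (u * x) ^ s + b = 0)
    (hx' : x' ^ n + a * x' ^ s + b = 0) (hux' : (u * x') ^ n + a * (u * x') ^ s + b = 0) :
    x = x' := by
  have hn : n ≠ 0 := by omega
  have hx0 := ne_zero_of_eval_eq_zero hb hn hs hx
  have hx0' := ne_zero_of_eval_eq_zero hb hn hs hx'
  have hu0 : u ≠ 0 := left_ne_zero_of_mul (ne_zero_of_eval_eq_zero hb hn hs hux)
  have hdiff := pow_sub_mul_eq_of_mul_eval_eq_zero hsn.le hx0 hx hux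
  have hdiff' := pow_sub_mul_eq_of_mul_eval_eq_zero hsn.le hx0' hx' hux'
  have hun : u ^ n - 1 ≠ 0 := by
    intro hun
    have hus : u ^ s = 1 := by
      rw [hun, mul_zero, zero_eq_neg, mul_eq_zero, sub_eq_zero] at hdiff
      exact hdiff.resolve_left ha
    exact hu1 (FiniteField.eq_one_of_pow_eq_one_of_gcd_eq_one hgcd hu0
      (sub_eq_zero.mp hun) hus)
  have hpow_sub : x ^ (n - s) = x' ^ (n - s) := mul_right_cancel₀ hun (hdiff.trans hdiff'.symm)
  have hfac := pow_mul_pow_sub_add_eq hsn.le hx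
  have hfac' := pow_mul_pow_sub_add_eq hsn.le hx'
  have hpow_s : x ^ s = x' ^ s := by
    rw [← hpow_sub] at hfac'
    exact mul_right_cancel₀ (right_ne_zero_of_mul (hfac ▸ neg_ne_zero.mpr hb))
      (hfac.trans hfac'.symm)
  have hpow_n : x ^ n = x' ^ n := by
    rw [← Nat.sub_add_cancel hsn.le, pow_add, pow_add, hpow_sub, hpow_s]
  exact FiniteField.eq_of_pow_eq_of_gcd_eq_one hgcd hx0 hx0' hpow_n hpow_s

theorem card_offDiag_roots_le [DecidableEq F] (ha : a ≠ 0) (hb : b ≠ 0) (hs : s ≠ 0)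
    (hsn : s < n) (hgcd : Nat.gcd n (Nat.gcd s (Fintype.card F - 1)) = 1) :
    (X ^ n + C a * X ^ s + C b : F[X]).roots.toFinset.offDiag.card ≤ Fintype.card F - 2 := by
  set S := (X ^ n + C a * X ^ s + C b : F[X]).roots.toFinset
  have hroot : ∀ x ∈ S, x ^ n + a * x ^ s + b = 0 := fun x hx => by
    simpa using isRoot_of_mem_roots (Multiset.mem_toFinset.mp hx)
  refine FiniteField.card_offDiag_le_card_sub_two
    (fun h0 => ne_zero_of_eval_eq_zero hb (by omega) hs (hroot 0 h0) rfl) ?_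
  rintro ⟨x, y⟩ hp ⟨x', y'⟩ hp' (hu : y / x = y' / x')
  obtain ⟨hx, hy, hxy⟩ := Finset.mem_offDiag.mp hp
  obtain ⟨hx', hy', -⟩ := Finset.mem_offDiag.mp hp'
  have hx0 := ne_zero_of_eval_eq_zero hb (by omega) hs (hroot x hx)
  have hx0' := ne_zero_of_eval_eq_zero hb (by omega) hs (hroot x' hx')
  have hy_eq : y = y / x * x := (div_mul_cancel₀ y hx0).symm
  have hy_eq' : y' = y / x * x' := by rw [hu, div_mul_cancel₀ y' hx0']
  have hu1 : y / x ≠ 1 := fun h => hxy ((div_eq_one_iff_eq hx0).mp h).symm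
  have hxx' : x = x' := eq_of_mul_eval_eq_zero ha hb hs hsn hgcd hu1 (hroot x hx)
    (hy_eq ▸ hroot y hy) (hroot x' hx') (hy_eq' ▸ hroot y' hy')
  subst hxx'
  rw [hy_eq, hy_eq']

end Trinomial

theorem Nat.cast_le_half_add_sqrt_of_sq_sub_add_one_le {r m : ℕ} (h : r ^ 2 - r + 1 ≤ m) :
    (r : ℝ) ≤ 1 / 2 + √(m : ℝ) := by
  have hr : r ≤ r ^ 2 := Nat.le_self_pow two_ne_zero r
  have hreal : (r : ℝ) ^ 2 - r + 1 ≤ m := by exact_mod_cast h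
  have hsq : ((r : ℝ) - 1 / 2) ^ 2 ≤ m := by nlinarith
  linarith [(le_abs_self _).trans (Real.abs_le_sqrt hsq)]

theorem stmt5 (F : Type*) [Field F] [Fintype F] [DecidableEq F]
    (n s : ℕ) (a b : F) (ha : a ≠ 0) (hb : b ≠ 0) (hs : 0 < s) (hsn : s < n)
    (hgcd : Nat.gcd n (Nat.gcd s (Fintype.card F - 1)) = 1)
    (r : ℕ) (hr : r = (X ^ n + C a * X ^ s + C b : F[X]).roots.toFinset.card) :
    (r : ℝ) ≤ 1 / 2 + Real.sqrt ((Fintype.card F - 1 : ℕ) : ℝ) ∧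
      r ^ 2 - r + 1 ≤ Fintype.card F - 1 := by
  have hq : 1 < Fintype.card F := Fintype.one_lt_card
  have hoff := Trinomial.card_offDiag_roots_le ha hb hs.ne' hsn hgcd
  rw [Finset.offDiag_card, ← hr] at hoff
  have hbound : r ^ 2 - r + 1 ≤ Fintype.card F - 1 := by
    rw [sq]
    omega
  exact ⟨Nat.cast_le_half_add_sqrt_of_sq_sub_add_one_le hbound, hbound⟩
end

section
/- Let p be an odd prime and k ≥ 1. The trinomial f(x) = x^{p^k} + x - 2 has exactly p^k distinct roots in F_{p^{2k}}, and all of these roots are nonzero. -/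
open Polynomial

theorem stmt7 (p k : ℕ) (hp : p.Prime) (hodd : Odd p) (hk : 1 ≤ k)
    (F : Type*) [Field F] [Fintype F] [DecidableEq F] (hF : Fintype.card F = p ^ (2 * k)) :
    (X ^ p ^ k + X - C 2 : F[X]).roots.toFinset.card = p ^ k ∧
    ∀ α : F, (X ^ p ^ k + X - C 2 : F[X]).IsRoot α → α ≠ 0 := by
  haveI : Fact p.Prime := ⟨hp⟩
  set q := p ^ k with hq
  have hq1 : 1 < q := Nat.one_lt_pow (by omega) hp.one_lt
  -- characteristic
  have hpF : (p : F) = 0 := by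
    have h0 : ((Fintype.card F : ℕ) : F) = 0 := Nat.cast_card_eq_zero F
    rw [hF] at h0
    push_cast at h0
    exact pow_eq_zero_iff (by omega) |>.mp h0
  haveI hchar : CharP F p := (CharP.charP_iff_prime_eq_zero hp).2 hpF
  have h2ne : (2 : F) ≠ 0 := by
    intro h
    have : (p : ℕ) ∣ 2 := by
      have := (CharP.cast_eq_zero_iff F p 2).mp (by exact_mod_cast h)
      exact this
    have hp2 : p = 2 := (Nat.prime_dvd_prime_iff_eq hp Nat.prime_two).mp this
    rw [hp2] at hodd
    exact (Nat.not_odd_iff_even.mpr (by decide)) hodd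
  set f : F[X] := X ^ q + X - C 2 with hf
  -- degree of f
  have hdegf : f.degree = (q : ℕ) := by
    have h1 : (X + (-C 2) : F[X]).degree < (X ^ q : F[X]).degree := by
      rw [degree_X_pow]
      calc (X + (-C 2) : F[X]).degree ≤ max (X : F[X]).degree (-C 2 : F[X]).degree :=
            degree_add_le _ _
        _ ≤ 1 := by
            simp [degree_X, degree_neg]
            exact degree_C_le.trans (by norm_num)
        _ < (q : WithBot ℕ) := by exact_mod_cast hq1
    have : f = X ^ q + (X + (-C 2)) := by ring
    rw [this, degree_add_eq_left_of_degree_lt h1, degree_X_pow]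
  have hfne : f ≠ 0 := fun h => by simp [h] at hdegf
  have hndegf : f.natDegree = q := natDegree_eq_of_degree_eq_some hdegf
  -- f is separable
  have hqF : ((q : ℕ) : F) = 0 := by
    rw [hq]
    push_cast
    rw [hpF]
    exact zero_pow (by omega : k ≠ 0)
  have hsep : f.Separable := by
    have hd : derivative f = 1 := by
      rw [hf]
      simp only [derivative_sub, derivative_add, derivative_X_pow, derivative_X, derivative_C]
      rw [hqF]
      simp
    unfold Polynomial.Separable
    rw [hd]
    exact isCoprime_one_right
  have hnodup : f.roots.Nodup := nodup_roots hsep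
  -- key identity : f * (f^(q-1) - 1) = X^(card F) - X
  have hkey : f * (f ^ (q - 1) - 1) = X ^ Fintype.card F - X := by
    have hfq : f ^ q = X ^ (q * q) + X ^ q - C 2 := by
      have h2q : (2 : F) ^ q = 2 := by
        have : ((2 : ℕ) : F) ^ p ^ k = ((2 : ℕ) : F) := by
          rw [← iterateFrobenius_def]
          exact map_natCast (iterateFrobenius F p k) 2
        push_cast at this
        exact this
      calc f ^ q = (X ^ q + (X - C 2)) ^ p ^ k := by rw [hf, hq]; ring_nf
        _ = (X ^ q) ^ p ^ k + (X - C 2) ^ p ^ k := add_pow_char_pow (p := p) _ _ _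
        _ = X ^ (q * q) + (X ^ p ^ k - (C 2) ^ p ^ k) := by
            rw [sub_pow_char_pow, ← pow_mul]
        _ = X ^ (q * q) + X ^ q - C 2 := by
            rw [← C_pow, h2q, ← hq]; ring
    have hmul : f * (f ^ (q - 1) - 1) = f ^ q - f := by
      rw [mul_sub, mul_one, ← pow_succ']
      congr 2
      omega
    rw [hmul, hfq, hF, hf]
    have : p ^ (2 * k) = q * q := by rw [hq, ← pow_add]; ring_nf
    rw [this]
    ring
  -- root counting
  have hroots_all : (X ^ Fintype.card F - X : F[X]).roots = Finset.univ.val :=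
    FiniteField.roots_X_pow_card_sub_X F
  have hXne : (X ^ Fintype.card F - X : F[X]) ≠ 0 := FiniteField.X_pow_card_sub_X_ne_zero F (by
    rw [hF]; exact Nat.one_lt_pow (by omega) hp.one_lt)
  have hcardsum : Multiset.card f.roots + Multiset.card ((f ^ (q - 1) - 1).roots) = q * q := by
    have hsplit := roots_mul (hkey ▸ hXne : f * (f ^ (q - 1) - 1) ≠ 0)
    rw [hkey, hroots_all] at hsplit
    have hcard : Multiset.card (Finset.univ.val : Multiset F) = q * q := by
      have h1 : Multiset.card (Finset.univ.val : Multiset F) = Fintype.card F := rfl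
      rw [h1, hF, hq, ← pow_add]
      ring_nf
    rw [hsplit, Multiset.card_add] at hcard
    omega
  have hle2 : Multiset.card ((f ^ (q - 1) - 1).roots) ≤ q * (q - 1) := by
    calc Multiset.card ((f ^ (q - 1) - 1).roots) ≤ (f ^ (q - 1) - 1).natDegree :=
          card_roots' _
      _ ≤ max (f ^ (q - 1)).natDegree (1 : F[X]).natDegree := natDegree_sub_le _ _
      _ ≤ q * (q - 1) := by
          rw [natDegree_pow, hndegf, natDegree_one]
          simp [mul_comm]
  have hle1 : Multiset.card f.roots ≤ q := hndegf ▸ card_roots' f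
  have hcardf : Multiset.card f.roots = q := by
    have : q * q = q * (q - 1) + q := by
      have : q - 1 + 1 = q := by omega
      nlinarith [this]
    omega
  refine ⟨?_, ?_⟩
  · rw [Multiset.toFinset_card_of_nodup hnodup]
    exact hcardf
  · intro α hroot h0
    rw [h0] at hroot
    simp only [IsRoot, hf] at hroot
    rw [eval_sub, eval_add, eval_pow, eval_X, eval_C] at hroot
    rw [zero_pow (by omega : q ≠ 0)] at hroot
    simp at hroot
    exact h2ne hroot
end

section
/- Let p be an odd prime and k ≥ 1, and set q = p^{2k}, n = p^k, s = 1. Then gcd(n, s, q - 1) = 1 and the trinomial x^n + x - 2 ∈ F_q[x] has exactly √q distinct roots in F_q, showing that the bound ⌊1/2 + √(q-1)⌋ on the number of roots of a trinomial with δ = 1 is attained up to the floor. -/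
/-!
Write `n = p ^ k`, so that `q = n ^ 2`, and let `f = X ^ n + X - 2`. Since `2 ^ n = 2` and Frobenius
is additive, `f ^ n - f = X ^ q - X`; hence `f` divides `X ^ q - X`, which splits over `𝔽_q` with
distinct roots. So `f` has `deg f = n = √q` distinct roots in `𝔽_q`.
-/

open Polynomial

theorem FiniteField.card_roots_toFinset_of_dvd_X_pow_card_sub_X {F : Type*} [Field F] [Fintype F]
    [DecidableEq F] {f : F[X]} (hf : f ∣ X ^ Fintype.card F - X) :
    f.roots.toFinset.card = f.natDegree := by
  have hne := FiniteField.X_pow_card_sub_X_ne_zero F (Fintype.one_lt_card (α := F))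
  have hsplits : Splits (X ^ Fintype.card F - X : F[X]) := by
    simpa using (FiniteField.isSplittingField_sub F F).splits
  have hnodup : f.roots.Nodup := by
    refine Multiset.nodup_of_le (roots.le_of_dvd hne hf) ?_
    rw [FiniteField.roots_X_pow_card_sub_X]
    exact Finset.univ.nodup
  rw [Multiset.toFinset_card_of_nodup hnodup, splits_iff_card_roots.mp (hsplits.of_dvd hne hf)]

theorem Polynomial.natDegree_X_pow_add_X_sub_C {R : Type*} [Ring R] [Nontrivial R] {n : ℕ}
    (hn : 1 < n) (a : R) : (X ^ n + X - C a : R[X]).natDegree = n := by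
  rw [natDegree_sub_C, natDegree_add_eq_left_of_natDegree_lt] <;> simp [hn]

section ExpChar

variable {R : Type*} [CommRing R] {p : ℕ} [ExpChar R p] {k : ℕ}

theorem X_pow_add_X_sub_C_pow_expChar_pow_sub_self {a : R} (ha : a ^ p ^ k = a) :
    (X ^ p ^ k + X - C a : R[X]) ^ p ^ k - (X ^ p ^ k + X - C a) = X ^ (p ^ k * p ^ k) - X := by
  rw [sub_pow_expChar_pow, add_pow_expChar_pow, ← C_pow, ha, ← pow_mul]
  ring

theorem X_pow_add_X_sub_C_dvd_X_pow_sub_X {a : R} (ha : a ^ p ^ k = a) :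
    (X ^ p ^ k + X - C a : R[X]) ∣ X ^ (p ^ k * p ^ k) - X := by
  rw [← X_pow_add_X_sub_C_pow_expChar_pow_sub_self ha]
  exact dvd_sub (dvd_pow_self _ (expChar_pow_pos R p k).ne') dvd_rfl

end ExpChar

theorem card_roots_toFinset_X_pow_add_X_sub_C {F : Type*} [Field F] [Fintype F] [DecidableEq F]
    {p k : ℕ} [ExpChar F p] (hF : Fintype.card F = p ^ k * p ^ k) {a : F} (ha : a ^ p ^ k = a) :
    (X ^ p ^ k + X - C a : F[X]).roots.toFinset.card = p ^ k := by
  have hpk : 1 < p ^ k := one_lt_mul_self_iff.mp (hF ▸ Fintype.one_lt_card)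
  have hdvd := hF ▸ X_pow_add_X_sub_C_dvd_X_pow_sub_X (R := F) ha
  rw [FiniteField.card_roots_toFinset_of_dvd_X_pow_card_sub_X hdvd, natDegree_X_pow_add_X_sub_C hpk]

theorem stmt8_general (p k : ℕ) (hp : p.Prime)
    (F : Type*) [Field F] [Fintype F] [DecidableEq F] (hF : Fintype.card F = p ^ (2 * k)) :
    Nat.gcd (p ^ k) (Nat.gcd 1 (Fintype.card F - 1)) = 1 ∧
    (X ^ p ^ k + X - C 2 : F[X]).roots.toFinset.card = Nat.sqrt (Fintype.card F) ∧
    Nat.sqrt (Fintype.card F) = p ^ k := by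
  have hsqrt : Nat.sqrt (Fintype.card F) = p ^ k := by
    rw [hF, mul_comm, pow_mul, Nat.sqrt_eq']
  have : Fact p.Prime := ⟨hp⟩
  have : CharP F p := charP_of_card_eq_prime_pow hF
  have htwo : (2 : F) ^ p ^ k = 2 := by
    simpa only [iterateFrobenius_def] using map_ofNat (iterateFrobenius F p k) 2
  refine ⟨by simp, ?_, hsqrt⟩
  rw [hsqrt]
  exact card_roots_toFinset_X_pow_add_X_sub_C (by rw [hF, two_mul, pow_add]) htwo

theorem stmt8 (p k : ℕ) (hp : p.Prime) (hodd : Odd p) (hk : 1 ≤ k)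
    (F : Type*) [Field F] [Fintype F] [DecidableEq F] (hF : Fintype.card F = p ^ (2 * k)) :
    Nat.gcd (p ^ k) (Nat.gcd 1 (Fintype.card F - 1)) = 1 ∧
    (X ^ p ^ k + X - C 2 : F[X]).roots.toFinset.card = Nat.sqrt (Fintype.card F) ∧
    Nat.sqrt (Fintype.card F) = p ^ k :=
  stmt8_general p k hp F hF
end

section
/- Let F be a field, G ⊆ F* a finite multiplicative subgroup of order N, n > s > 0 with gcd(n, s, N) = 1, and f(x) = a x^n + b x^s + 1. If ζ_1, ..., ζ_r ∈ G are distinct roots of f, then the polynomials g_i(x) = f(ζ_i x) are pairwise distinct members of the family {c x^n - (c+1) x^s + 1 : c ≠ 0, -1}, each having r distinct roots in G. -/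
theorem stmt9 (F : Type*) [Field F] (G : Subgroup Fˣ) [Finite G]
    (N n s : ℕ) (hN : Nat.card G = N) (hs : 0 < s) (hsn : s < n)
    (hgcd : Nat.gcd n (Nat.gcd s N) = 1)
    (a b : F) (ha : a ≠ 0) (hb : b ≠ 0)
    (r : ℕ) (ζ : Fin r → Fˣ) (hinj : Function.Injective ζ)
    (hζG : ∀ i, ζ i ∈ G)
    (hroot : ∀ i, a * ((ζ i : Fˣ) : F) ^ n + b * ((ζ i : Fˣ) : F) ^ s + 1 = 0) :
    (∀ i, ∃ c : F, c ≠ 0 ∧ c ≠ -1 ∧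
        a * ((ζ i : Fˣ) : F) ^ n = c ∧ b * ((ζ i : Fˣ) : F) ^ s = -(c + 1)) ∧
    (∀ i j, i ≠ j →
        (a * ((ζ i : Fˣ) : F) ^ n, b * ((ζ i : Fˣ) : F) ^ s) ≠
        (a * ((ζ j : Fˣ) : F) ^ n, b * ((ζ j : Fˣ) : F) ^ s)) ∧
    (∀ i, r ≤ Set.ncard {α : Fˣ | α ∈ G ∧
        (a * ((ζ i : Fˣ) : F) ^ n) * (α : F) ^ n +
        (b * ((ζ i : Fˣ) : F) ^ s) * (α : F) ^ s + 1 = 0}) := by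
  have hGfin : (G : Set Fˣ).Finite := Set.toFinite _
  refine ⟨?_, ?_, ?_⟩
  · intro i
    refine ⟨a * ((ζ i : Fˣ) : F) ^ n,
      mul_ne_zero ha (pow_ne_zero _ (Units.ne_zero _)), ?_, rfl, ?_⟩
    · intro h
      have h2 := hroot i
      rw [h] at h2
      have h3 : b * ((ζ i : Fˣ) : F) ^ s = 0 := by linear_combination h2
      exact mul_ne_zero hb (pow_ne_zero _ (Units.ne_zero _)) h3
    · linear_combination hroot i
  · intro i j hij hpair
    have h1 : a * ((ζ i : Fˣ) : F) ^ n = a * ((ζ j : Fˣ) : F) ^ n :=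
      congrArg Prod.fst hpair
    have h2 : b * ((ζ i : Fˣ) : F) ^ s = b * ((ζ j : Fˣ) : F) ^ s :=
      congrArg Prod.snd hpair
    have hn' : ((ζ i : Fˣ) : F) ^ n = ((ζ j : Fˣ) : F) ^ n := mul_left_cancel₀ ha h1
    have hs' : ((ζ i : Fˣ) : F) ^ s = ((ζ j : Fˣ) : F) ^ s := mul_left_cancel₀ hb h2
    have hun : (ζ i) ^ n = (ζ j) ^ n := Units.ext (by simpa using hn')
    have hus : (ζ i) ^ s = (ζ j) ^ s := Units.ext (by simpa using hs')
    set u : Fˣ := ζ i * (ζ j)⁻¹ with hu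
    have hun1 : u ^ n = 1 := by
      rw [hu, mul_pow, inv_pow, hun, mul_inv_cancel]
    have hus1 : u ^ s = 1 := by
      rw [hu, mul_pow, inv_pow, hus, mul_inv_cancel]
    have huG : u ∈ G := mul_mem (hζG i) (inv_mem (hζG j))
    have hdvdN : orderOf u ∣ N := by
      rw [← hN]
      have : orderOf (⟨u, huG⟩ : G) ∣ Nat.card G := orderOf_dvd_natCard _
      rwa [← orderOf_submonoid (⟨u, huG⟩ : G)] at this
    have hdvd1 : orderOf u ∣ 1 := by
      rw [← hgcd]
      exact Nat.dvd_gcd (orderOf_dvd_of_pow_eq_one hun1)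
        (Nat.dvd_gcd (orderOf_dvd_of_pow_eq_one hus1) hdvdN)
    have hu1 : u = 1 := orderOf_eq_one_iff.mp (Nat.dvd_one.mp hdvd1)
    have : ζ i = ζ j := by
      have := mul_inv_eq_one.mp hu1
      exact this
    exact hij (hinj this)
  · intro i
    set S : Set Fˣ := {α : Fˣ | α ∈ G ∧
        (a * ((ζ i : Fˣ) : F) ^ n) * (α : F) ^ n +
        (b * ((ζ i : Fˣ) : F) ^ s) * (α : F) ^ s + 1 = 0} with hS
    have hSfin : S.Finite := hGfin.subset (fun α hα => hα.1)
    set φ : Fin r → Fˣ := fun j => ζ j * (ζ i)⁻¹ with hφdef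
    have hφinj : Function.Injective φ := by
      intro j k h
      exact hinj (mul_right_cancel h)
    have e : ∀ (m : ℕ) (j : Fin r),
        ((ζ i : Fˣ) : F) ^ m * (((ζ j : Fˣ) : F) * (((ζ i : Fˣ) : F))⁻¹) ^ m
          = ((ζ j : Fˣ) : F) ^ m := by
      intro m j
      rw [mul_pow, inv_pow, mul_comm (((ζ j : Fˣ) : F) ^ m), ← mul_assoc,
        mul_inv_cancel₀ (pow_ne_zero _ (Units.ne_zero _)), one_mul]
    have hsub : Set.range φ ⊆ S := by
      rintro α ⟨j, rfl⟩
      refine ⟨mul_mem (hζG j) (inv_mem (hζG i)), ?_⟩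
      simp only [hφdef, Units.val_mul, Units.val_inv_eq_inv_val]
      rw [mul_assoc, e n j, mul_assoc, e s j]
      exact hroot j
    calc r = (Set.range φ).ncard := by
            rw [← Set.image_univ, Set.ncard_image_of_injective _ hφinj,
              Set.ncard_univ, Nat.card_eq_fintype_card, Fintype.card_fin]
      _ ≤ S.ncard := Set.ncard_le_ncard hsub hSfin
end

section
/- Let q be a prime power and f(x) = c_1 x^{a_1} + ... + c_t x^{a_t} ∈ F_q[x] with all c_i nonzero and a_1 > a_2 > ... > a_t = 0. If f vanishes on an entire coset of a subgroup H ⊆ F_q* of order k, then for each exponent a_i there exists j ≠ i with a_i ≡ a_j (mod k). -/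
open Polynomial

theorem stmt18 (F : Type*) [Field F] [Fintype F]
    (t : ℕ) (ht : 0 < t) (c : Fin t → F) (a : Fin t → ℕ)
    (hc : ∀ i, c i ≠ 0) (hanti : StrictAnti a) (hlast : a ⟨t - 1, by omega⟩ = 0)
    (H : Subgroup Fˣ) (k : ℕ) (hk : Nat.card H = k) (g : Fˣ)
    (hvanish : ∀ x : Fˣ, x ∈ H → ∑ i, c i * ((g : F) * (x : F)) ^ a i = 0) :
    ∀ i, ∃ j, j ≠ i ∧ a i ≡ a j [MOD k] := by
  classical
  intro i
  by_contra hcon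
  push_neg at hcon
  simp only [Nat.ModEq] at hcon
  have hk0 : 0 < k := by
    subst hk; exact Nat.card_pos
  set P : Polynomial F :=
    ∑ j, Polynomial.C (c j * (g : F) ^ (a j)) * Polynomial.X ^ (a j % k) with hPdef
  have hxk : ∀ x : Fˣ, x ∈ H → (x : F) ^ k = 1 := by
    intro x hx
    have h1 : (⟨x, hx⟩ : H) ^ k = 1 := by
      rw [← hk]; exact pow_card_eq_one'
    have h2 : (x : Fˣ) ^ k = 1 := by
      have := congrArg (Subgroup.subtype H) h1
      simpa using this
    rw [← Units.val_pow_eq_pow_val, h2, Units.val_one]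
  have heval : ∀ x : Fˣ, x ∈ H → P.eval (x : F) = 0 := by
    intro x hx
    have hpow : ∀ n : ℕ, (x : F) ^ n = (x : F) ^ (n % k) := by
      intro n
      conv_lhs => rw [← Nat.mod_add_div n k]
      rw [pow_add, pow_mul, hxk x hx, one_pow, mul_one]
    rw [hPdef]
    simp only [eval_finset_sum, eval_mul, eval_C, eval_pow, eval_X]
    rw [← hvanish x hx]
    apply Finset.sum_congr rfl
    intro j _
    rw [mul_pow, mul_assoc, ← hpow (a j)]
  have hdeg : P.natDegree < k := by
    apply lt_of_le_of_lt (Polynomial.natDegree_sum_le _ _)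
    apply Finset.sup_lt_iff (by exact_mod_cast hk0) |>.mpr
    intro j _
    apply lt_of_le_of_lt (Polynomial.natDegree_C_mul_le _ _)
    simpa using Nat.mod_lt _ hk0
  have hinj : Function.Injective (fun x : H => ((x : Fˣ) : F)) := by
    intro x y hxy
    exact Subtype.ext (Units.ext hxy)
  have hP0 : P = 0 := by
    apply Polynomial.eq_zero_of_natDegree_lt_card_of_eval_eq_zero P hinj
    · intro x; exact heval x x.2
    · rwa [← Nat.card_eq_fintype_card, hk]
  have hcoeff : P.coeff (a i % k) = 0 := by rw [hP0]; simp
  rw [hPdef, Polynomial.finset_sum_coeff] at hcoeff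
  simp only [Polynomial.coeff_C_mul, Polynomial.coeff_X_pow] at hcoeff
  have honly : ∀ j ∈ Finset.univ, j ≠ i →
      c j * (g : F) ^ a j * (if a i % k = a j % k then (1:F) else 0) = 0 := by
    intro j _ hj
    rw [if_neg (fun h => hcon j hj h), mul_zero]
  have hsum := Finset.sum_eq_single (s := Finset.univ) i
    (fun j _ hj => honly j (Finset.mem_univ j) hj)
    (fun h => absurd (Finset.mem_univ i) h)
  rw [hsum, if_pos rfl, mul_one] at hcoeff
  rcases mul_eq_zero.mp hcoeff with h | h
  · exact hc i h
  · exact g.ne_zero ((pow_eq_zero_iff'.mp h).1)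
end

section
/- Let q be a prime power, f(x) = x^n + a x^s + b ∈ F_q[x] with a, b ≠ 0 and n > s > 0, and δ = gcd(n, s, q-1). If C is the maximal size of a coset of a subgroup of F_q* on which f vanishes identically, and f has at least one root in F_q, then C = δ. -/
/-!
If `f = X ^ n + a X ^ s + b` vanishes at `g`, `g x` and `g x²`, then writing `u = xⁿ`, `v = xˢ`
the three equations `gⁿ uʲ + a gˢ vʲ + b = 0` (`j = 0, 1, 2`) force `b (1 - u)(1 - v) = 0`, and
then `u = v = 1`. Hence a subgroup `H` of `Fˣ` with a coset on which `f` vanishes consists of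
`gcd(n, s)`-th roots of unity. Conversely `f(g x) = f(g)` for every such root of unity `x`, so
`f` vanishes on `g · μ_{gcd(n,s)}` as soon as `f(g) = 0`. In the cyclic group `F_q^*` the group
`μ_{gcd(n,s)}` has order `gcd(n, s, q - 1)`.
-/

theorem pow_eq_one_of_trinomial_zero_at_mul_pow {F : Type*} [Field F] {n s : ℕ} {a b g x : F}
    (ha : a ≠ 0) (hb : b ≠ 0) (hg : g ≠ 0)
    (h₀ : g ^ n + a * g ^ s + b = 0)
    (h₁ : (g * x) ^ n + a * (g * x) ^ s + b = 0)
    (h₂ : (g * x ^ 2) ^ n + a * (g * x ^ 2) ^ s + b = 0) :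
    x ^ n = 1 ∧ x ^ s = 1 := by
  have hprod : b * ((x ^ n - 1) * (x ^ s - 1)) = 0 := by
    linear_combination x ^ n * x ^ s * h₀ - (x ^ n + x ^ s) * h₁ + h₂
  have hdiff : g ^ n * (x ^ n - 1) + a * g ^ s * (x ^ s - 1) = 0 := by
    linear_combination h₁ - h₀
  rcases mul_eq_zero.1 ((mul_eq_zero.1 hprod).resolve_left hb) with hn | hs
  · rw [hn, mul_zero, zero_add] at hdiff
    have hs := (mul_eq_zero.1 hdiff).resolve_left (mul_ne_zero ha (pow_ne_zero _ hg))
    exact ⟨sub_eq_zero.1 hn, sub_eq_zero.1 hs⟩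
  · rw [hs, mul_zero, add_zero] at hdiff
    have hn := (mul_eq_zero.1 hdiff).resolve_left (pow_ne_zero _ hg)
    exact ⟨sub_eq_zero.1 hn, sub_eq_zero.1 hs⟩

theorem le_rootsOfUnity_gcd_of_trinomial_zero_on_coset {F : Type*} [Field F] {n s : ℕ}
    {a b : F} (ha : a ≠ 0) (hb : b ≠ 0) {H : Subgroup Fˣ} {g : Fˣ}
    (hvan : ∀ x ∈ H, ((g * x : Fˣ) : F) ^ n + a * ((g * x : Fˣ) : F) ^ s + b = 0) :
    H ≤ rootsOfUnity (n.gcd s) F := by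
  intro x hx
  have h₀ := hvan 1 H.one_mem
  have h₁ := hvan x hx
  have h₂ := hvan (x ^ 2) (H.pow_mem hx 2)
  push_cast at h₀ h₁ h₂
  rw [mul_one] at h₀
  obtain ⟨hn, hs⟩ := pow_eq_one_of_trinomial_zero_at_mul_pow ha hb g.ne_zero h₀ h₁ h₂
  rw [mem_rootsOfUnity, pow_gcd_eq_one]
  exact ⟨Units.ext (by simpa using hn), Units.ext (by simpa using hs)⟩

theorem trinomial_zero_on_coset_rootsOfUnity_gcd {R : Type*} [CommRing R] {n s : ℕ} {a b : R}
    {g : Rˣ} (hg : (g : R) ^ n + a * (g : R) ^ s + b = 0) :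
    ∀ x ∈ rootsOfUnity (n.gcd s) R,
      ((g * x : Rˣ) : R) ^ n + a * ((g * x : Rˣ) : R) ^ s + b = 0 := by
  intro x hx
  have hn : (x : R) ^ n = 1 := by
    simpa using congrArg Units.val (rootsOfUnity_le_of_dvd (Nat.gcd_dvd_left n s) hx)
  have hs : (x : R) ^ s = 1 := by
    simpa using congrArg Units.val (rootsOfUnity_le_of_dvd (Nat.gcd_dvd_right n s) hx)
  rw [Units.val_mul, mul_pow, mul_pow, hn, hs, mul_one, mul_one, hg]

theorem FiniteField.card_rootsOfUnity (F : Type*) [Field F] [Fintype F] (k : ℕ) :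
    Nat.card (rootsOfUnity k F) = k.gcd (Fintype.card F - 1) := by
  classical
  rw [rootsOfUnity_eq_ker, IsCyclic.card_powMonoidHom_ker, Nat.card_eq_fintype_card,
    Fintype.card_units, Nat.gcd_comm]

theorem stmt19_general (F : Type*) [Field F] [Fintype F]
    (n s : ℕ) (a b : F) (ha : a ≠ 0) (hb : b ≠ 0)
    (δ : ℕ) (hδ : δ = Nat.gcd n (Nat.gcd s (Fintype.card F - 1)))
    (Cmax : ℕ)
    (hex : ∃ (H : Subgroup Fˣ) (g : Fˣ), Nat.card H = Cmax ∧
      ∀ x ∈ H, ((g * x : Fˣ) : F) ^ n + a * ((g * x : Fˣ) : F) ^ s + b = 0)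
    (hmax : ∀ (H : Subgroup Fˣ) (g : Fˣ),
      (∀ x ∈ H, ((g * x : Fˣ) : F) ^ n + a * ((g * x : Fˣ) : F) ^ s + b = 0) →
      Nat.card H ≤ Cmax) :
    Cmax = δ := by
  obtain ⟨H, g, rfl, hvan⟩ := hex
  have hg : (g : F) ^ n + a * (g : F) ^ s + b = 0 := by simpa using hvan 1 H.one_mem
  have hcard : Nat.card (rootsOfUnity (n.gcd s) F) = δ := by
    rw [FiniteField.card_rootsOfUnity, Nat.gcd_assoc, hδ]
  rw [← hcard]
  exact le_antisymm
    (Subgroup.card_le_of_le (le_rootsOfUnity_gcd_of_trinomial_zero_on_coset ha hb hvan))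
    (hmax _ g (trinomial_zero_on_coset_rootsOfUnity_gcd hg))

theorem stmt19 (F : Type*) [Field F] [Fintype F]
    (n s : ℕ) (a b : F) (ha : a ≠ 0) (hb : b ≠ 0) (hs : 0 < s) (hsn : s < n)
    (δ : ℕ) (hδ : δ = Nat.gcd n (Nat.gcd s (Fintype.card F - 1)))
    (Cmax : ℕ)
    (hex : ∃ (H : Subgroup Fˣ) (g : Fˣ), Nat.card H = Cmax ∧
      ∀ x ∈ H, ((g * x : Fˣ) : F) ^ n + a * ((g * x : Fˣ) : F) ^ s + b = 0)
    (hmax : ∀ (H : Subgroup Fˣ) (g : Fˣ),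
      (∀ x ∈ H, ((g * x : Fˣ) : F) ^ n + a * ((g * x : Fˣ) : F) ^ s + b = 0) →
      Nat.card H ≤ Cmax)
    (hroot : ∃ α : F, α ^ n + a * α ^ s + b = 0) :
    Cmax = δ :=
  stmt19_general F n s a b ha hb δ hδ Cmax hex hmax
end
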